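/- arXiv:2402.14752 — 4 statements merged into one kernel-verified Lean document; each statement's English description precedes it below -/
import Mathlib

section
/- Let G be a finite simple graph on a nonempty vertex set V that is vertex-transitive, and let J₀ ∈ ℝ^V be the vector with every entry equal to 1/√|V|. Then the infimum, over all H-feasible pairs (v, M) for G, of Σ_α (J₀)_α v_α, is equal to −√(ϑ(G)). In particular, the worst case over unit-norm J of the graph semi-definite program for H is achieved with J proportional to the all-ones vector. -/
open scoped BigOperators

/-- A theta-feasible matrix for `G`: real symmetric PSD with trace 1 and vanishing on edges. -/
def ThetaFeasible {V : Type*} [Fintype V] (G : SimpleGraph V) (M : Matrix V V ℝ) : Prop :=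
  M.IsSymm ∧ M.PosSemidef ∧ M.trace = 1 ∧ ∀ a b, G.Adj a b → M a b = 0

/-- The Lovász theta function of `G`. -/
noncomputable def lovaszTheta {V : Type*} [Fintype V] (G : SimpleGraph V) : ℝ :=
  sSup {x : ℝ | ∃ M : Matrix V V ℝ, ThetaFeasible G M ∧ x = ∑ a, ∑ b, M a b}

/-- An H²-feasible matrix for `G`: real symmetric PSD, unit diagonal, vanishing on edges. -/
def H2Feasible {V : Type*} [Fintype V] (G : SimpleGraph V) (M : Matrix V V ℝ) : Prop :=
  M.IsSymm ∧ M.PosSemidef ∧ (∀ a, M a a = 1) ∧ ∀ a b, G.Adj a b → M a b = 0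

/-- The block matrix N = [[1, vᵀ],[v, M]]. -/
def blockN {V : Type*} [Fintype V] [DecidableEq V] (v : V → ℝ) (M : Matrix V V ℝ) :
    Matrix (Unit ⊕ V) (Unit ⊕ V) ℝ :=
  Matrix.fromBlocks 1 (Matrix.of fun _ b => v b) (Matrix.of fun a _ => v a) M

/-- An H-feasible pair for `G`. -/
def HFeasible {V : Type*} [Fintype V] [DecidableEq V] (G : SimpleGraph V)
    (v : V → ℝ) (M : Matrix V V ℝ) : Prop :=
  H2Feasible G M ∧ (blockN v M).PosSemidef

/-- `G` is vertex-transitive. -/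
def VertexTransitive {V : Type*} (G : SimpleGraph V) : Prop :=
  ∀ u w : V, ∃ g : G ≃g G, g u = w

/-!
Averaging a theta-feasible matrix over `Aut G` preserves theta-feasibility and the sum `S` of
its entries; when `G` is vertex-transitive the average has constant diagonal `1/n` and constant
row sums `S/n`. Scaled by `n` it becomes an H²-feasible `M` with `M 1 = S 1`, and for the constant
vector `v = -√(S/n)` the Schur complement `M - v vᵀ` is the compression of `M` to `1ᗮ`, hence PSD:
this H-feasible pair has objective `-√S`. Conversely, for every H-feasible `(v, M)` the Schur
complement gives `(∑ v)² ≤ 1ᵀ M 1`, and `M / n` is theta-feasible, so the objective is at least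
`-√ϑ(G)`.
-/

open Matrix

namespace Matrix

variable {n : Type*} [Fintype n] {M : Matrix n n ℝ}

lemma PosSemidef.two_mul_apply_le (hM : M.PosSemidef) (i j : n) :
    2 * M i j ≤ M i i + M j j := by
  classical
  have hsymm : M j i = M i j := hM.isHermitian.apply i j
  have h := hM.dotProduct_mulVec_nonneg (Pi.single i 1 - Pi.single j 1)
  simp only [star_trivial, mulVec_sub, mulVec_single, dotProduct_sub, sub_dotProduct,
    single_dotProduct, one_mul, MulOpposite.op_one, one_smul, col_apply] at h
  linarith

lemma PosSemidef.sum_sum_nonneg (hM : M.PosSemidef) : 0 ≤ ∑ i, ∑ j, M i j := by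
  simpa [dotProduct, mulVec, Finset.mul_sum] using hM.dotProduct_mulVec_nonneg 1

variable [DecidableEq n]

lemma PosSemidef.sub_smul_vecMulVec_one [Nonempty n] (hM : M.PosSemidef) {s : ℝ}
    (hs : M *ᵥ 1 = s • 1) :
    (M - (s / Fintype.card n) • vecMulVec 1 1).PosSemidef := by
  set J : Matrix n n ℝ := vecMulVec 1 1
  have hsymm : Mᵀ = M := by simpa using hM.isHermitian.eq
  have hMJ : M * J = s • J := by
    rw [mul_vecMulVec, hs, smul_vecMulVec]
  have hJM : J * M = s • J := by
    rw [vecMulVec_mul, ← mulVec_transpose, hsymm, hs, vecMulVec_smul]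
  have hJJ : J * J = (Fintype.card n : ℝ) • J := by
    rw [vecMulVec_mul_vecMulVec, one_dotProduct_one, vecMulVec_smul]
  have hJsymm : Jᴴ = J := by ext; simp [J]
  -- compress `M` by the orthogonal projection onto `1ᗮ`; `1` is an eigenvector of `M`
  have hconj : (1 - (Fintype.card n : ℝ)⁻¹ • J)ᴴ * M * (1 - (Fintype.card n : ℝ)⁻¹ • J) =
      M - (s / Fintype.card n) • J := by
    have hn : (Fintype.card n : ℝ) ≠ 0 := by positivity
    simp only [conjTranspose_sub, conjTranspose_one, conjTranspose_smul, star_trivial, hJsymm,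
      sub_mul, mul_sub, one_mul, mul_one, smul_mul_assoc, mul_smul_comm, hMJ, hJM, hJJ]
    match_scalars <;> field_simp
    ring
  rw [← hconj]
  exact hM.conjTranspose_mul_mul_same _

end Matrix

lemma blockN_posSemidef_iff {V : Type*} [Fintype V] [DecidableEq V] (v : V → ℝ)
    (M : Matrix V V ℝ) : (blockN v M).PosSemidef ↔ (M - vecMulVec v v).PosSemidef := by
  have hB : (of fun a (_ : Unit) => v a) = (of fun (_ : Unit) b => v b)ᴴ := by
    ext; simp
  have hSchur : (of fun (_ : Unit) b => v b)ᴴ * (1 : Matrix Unit Unit ℝ)⁻¹ *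
      of (fun (_ : Unit) b => v b) = vecMulVec v v := by
    ext; simp [mul_apply, vecMulVec_apply]
  have : Invertible (1 : Matrix Unit Unit ℝ) := invertibleOne
  rw [blockN, hB, PosDef.fromBlocks₁₁ _ _ PosDef.one, hSchur]

instance {V : Type*} [Finite V] {G : SimpleGraph V} : Finite (G ≃g G) :=
  Finite.of_injective (fun g : G ≃g G => (g : V → V)) DFunLike.coe_injective

lemma VertexTransitive.eq_sum_div_card {V : Type*} [Fintype V] {G : SimpleGraph V}
    (hG : VertexTransitive G) {f : V → ℝ} (hf : ∀ (g : G ≃g G) a, f (g a) = f a) (a : V) :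
    f a = (∑ b, f b) / Fintype.card V := by
  have hconst : ∀ b, f b = f a := fun b => by
    obtain ⟨g, rfl⟩ := hG a b
    exact hf g a
  have : Nonempty V := ⟨a⟩
  have : (Fintype.card V : ℝ) ≠ 0 := Nat.cast_ne_zero.mpr Fintype.card_ne_zero
  rw [Finset.sum_congr rfl fun b _ => hconst b, Finset.sum_const, Finset.card_univ, nsmul_eq_mul]
  field_simp

namespace SimpleGraph

variable {V : Type*} (G : SimpleGraph V) [Fintype (G ≃g G)]

noncomputable def autAverage (M : Matrix V V ℝ) : Matrix V V ℝ :=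
  (Fintype.card (G ≃g G) : ℝ)⁻¹ • ∑ g : G ≃g G, M.submatrix g g

variable {G}

lemma autAverage_apply (M : Matrix V V ℝ) (a b : V) :
    autAverage G M a b = (Fintype.card (G ≃g G) : ℝ)⁻¹ * ∑ g : G ≃g G, M (g a) (g b) := by
  simp [autAverage, Matrix.sum_apply]

lemma autAverage_apply_map (M : Matrix V V ℝ) (h : G ≃g G) (a b : V) :
    autAverage G M (h a) (h b) = autAverage G M a b := by
  simp only [autAverage_apply]
  congr 1
  exact Fintype.sum_equiv (Equiv.mulRight h) _ _ fun g => rfl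

variable [Fintype V]

lemma sum_sum_autAverage (M : Matrix V V ℝ) :
    ∑ a, ∑ b, autAverage G M a b = ∑ a, ∑ b, M a b := by
  have hg (g : G ≃g G) : ∑ a, ∑ b, M (g a) (g b) = ∑ a, ∑ b, M a b :=
    Fintype.sum_equiv g.toEquiv _ _ fun a => Fintype.sum_equiv g.toEquiv _ _ fun b => rfl
  have hk : (Fintype.card (G ≃g G) : ℝ) ≠ 0 := Nat.cast_ne_zero.mpr Fintype.card_ne_zero
  simp only [autAverage_apply, ← Finset.mul_sum]
  rw [Finset.sum_congr rfl fun a _ => Finset.sum_comm, Finset.sum_comm]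
  simp only [hg, Finset.sum_const, Finset.card_univ, nsmul_eq_mul]
  field_simp

lemma trace_autAverage (M : Matrix V V ℝ) : (autAverage G M).trace = M.trace := by
  have hg (g : G ≃g G) : ∑ a, M (g a) (g a) = ∑ a, M a a :=
    Fintype.sum_equiv g.toEquiv _ _ fun a => rfl
  have hk : (Fintype.card (G ≃g G) : ℝ) ≠ 0 := Nat.cast_ne_zero.mpr Fintype.card_ne_zero
  simp only [Matrix.trace, Matrix.diag, autAverage_apply, ← Finset.mul_sum]
  rw [Finset.sum_comm]
  simp only [hg, Finset.sum_const, Finset.card_univ, nsmul_eq_mul]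
  field_simp

end SimpleGraph

open SimpleGraph

lemma ThetaFeasible.autAverage {V : Type*} [Fintype V] {G : SimpleGraph V} [Fintype (G ≃g G)]
    {M : Matrix V V ℝ} (hM : ThetaFeasible G M) :
    ThetaFeasible G (autAverage G M) := by
  obtain ⟨hsymm, hpsd, htrace, hedge⟩ := hM
  refine ⟨?_, ?_, by rw [trace_autAverage, htrace], fun a b hab => ?_⟩
  · ext a b
    simp [autAverage_apply, hsymm.apply]
  · unfold SimpleGraph.autAverage
    exact (Matrix.posSemidef_sum _ fun g _ => hpsd.submatrix _).smul (by positivity)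
  · rw [autAverage_apply, Finset.sum_eq_zero fun g _ => hedge _ _ (g.map_adj_iff.mpr hab),
      mul_zero]

section Feasibility

variable {V : Type*} [Fintype V] {G : SimpleGraph V}

def thetaValues (G : SimpleGraph V) : Set ℝ :=
  {x | ∃ M : Matrix V V ℝ, ThetaFeasible G M ∧ x = ∑ a, ∑ b, M a b}

lemma lovaszTheta_eq_sSup_thetaValues (G : SimpleGraph V) :
    lovaszTheta G = sSup (thetaValues G) := rfl

lemma ThetaFeasible.sum_sum_le_card {M : Matrix V V ℝ} (hM : ThetaFeasible G M) :
    ∑ a, ∑ b, M a b ≤ Fintype.card V := by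
  obtain ⟨-, hpsd, htrace, -⟩ := hM
  have h := Finset.sum_le_sum fun a (_ : a ∈ Finset.univ) =>
    Finset.sum_le_sum fun b (_ : b ∈ Finset.univ) => hpsd.two_mul_apply_le a b
  simp only [Finset.sum_add_distrib, ← Finset.mul_sum, Finset.sum_const, Finset.card_univ,
    nsmul_eq_mul] at h
  simp only [Matrix.trace, Matrix.diag] at htrace
  rw [htrace] at h
  linarith

lemma thetaValues_bddAbove (G : SimpleGraph V) : BddAbove (thetaValues G) :=
  ⟨Fintype.card V, by rintro _ ⟨M, hM, rfl⟩; exact hM.sum_sum_le_card⟩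

lemma thetaValues_nonempty [Nonempty V] (G : SimpleGraph V) : (thetaValues G).Nonempty := by
  classical
  obtain ⟨a⟩ := ‹Nonempty V›
  refine ⟨_, Matrix.diagonal (Pi.single a 1), ⟨Matrix.isSymm_diagonal _, ?_, ?_, ?_⟩, rfl⟩
  · exact Matrix.PosSemidef.diagonal (Pi.single_nonneg.mpr zero_le_one)
  · simp
  · exact fun b c hbc => Matrix.diagonal_apply_ne _ hbc.ne

lemma H2Feasible.thetaFeasible_inv_card_smul [Nonempty V] {M : Matrix V V ℝ}
    (h : H2Feasible G M) : ThetaFeasible G ((Fintype.card V : ℝ)⁻¹ • M) := by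
  obtain ⟨hsymm, hpsd, hdiag, hedge⟩ := h
  refine ⟨hsymm.smul _, hpsd.smul (by positivity), ?_, fun a b hab => by simp [hedge a b hab]⟩
  simp [Matrix.trace, hdiag]

variable [DecidableEq V]

lemma HFeasible.sq_sum_le {v : V → ℝ} {M : Matrix V V ℝ} (h : HFeasible G v M) :
    (∑ a, v a) ^ 2 ≤ ∑ a, ∑ b, M a b := by
  have h := ((blockN_posSemidef_iff v M).mp h.2).sum_sum_nonneg
  simp only [Matrix.sub_apply, Matrix.vecMulVec_apply, Finset.sum_sub_distrib] at h
  rw [sq, Finset.sum_mul_sum]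
  linarith

lemma HFeasible.neg_sqrt_le_sum [Nonempty V] {v : V → ℝ} {M : Matrix V V ℝ}
    (h : HFeasible G v M) : -(√(Fintype.card V) * √(lovaszTheta G)) ≤ ∑ a, v a := by
  have hn : (0 : ℝ) < Fintype.card V := by positivity
  have hθ : (Fintype.card V : ℝ)⁻¹ * ∑ a, ∑ b, M a b ≤ lovaszTheta G :=
    le_csSup (thetaValues_bddAbove G)
      ⟨_, h.1.thetaFeasible_inv_card_smul, by simp [Finset.mul_sum]⟩
  have hsq : (∑ a, v a) ^ 2 ≤ Fintype.card V * lovaszTheta G := by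
    have := h.sq_sum_le
    rw [inv_mul_le_iff₀ hn] at hθ
    linarith
  rw [← Real.sqrt_mul hn.le]
  exact neg_le_of_abs_le (Real.abs_le_sqrt hsq)

end Feasibility

lemma ThetaFeasible.exists_hFeasible {V : Type*} [Fintype V] [DecidableEq V] [Nonempty V]
    {G : SimpleGraph V} (hG : VertexTransitive G) {M' : Matrix V V ℝ} (hM' : ThetaFeasible G M') :
    ∃ v M, HFeasible G v M ∧ ∑ a, v a = -(√(Fintype.card V) * √(∑ a, ∑ b, M' a b)) := by
  have := Fintype.ofFinite (G ≃g G)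
  set n : ℝ := (Fintype.card V : ℝ)
  set S := ∑ a, ∑ b, M' a b
  have hn : 0 < n := by positivity
  have hS : 0 ≤ S := hM'.2.1.sum_sum_nonneg
  obtain ⟨hsymm, hpsd, htrace, hedge⟩ := hM'.autAverage
  set A := SimpleGraph.autAverage G M'
  have hdiag (a : V) : A a a = 1 / n := by
    rw [hG.eq_sum_div_card (f := fun a => A a a) (fun g a => autAverage_apply_map M' g a a) a,
      ← htrace]
    rfl
  have hrow (a : V) : ∑ b, A a b = S / n := by
    rw [hG.eq_sum_div_card (f := fun a => ∑ b, A a b) (fun g a => ?_) a, sum_sum_autAverage]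
    exact (Fintype.sum_equiv g.toEquiv _ _ fun b => (autAverage_apply_map M' g a b).symm).symm
  set M := n • A
  set v : V → ℝ := fun _ => -√(S / n)
  have hH2 : H2Feasible G M := by
    refine ⟨hsymm.smul n, hpsd.smul hn.le, fun a => ?_, fun a b hab => ?_⟩
    · simp [M, hdiag, hn.ne']
    · simp [M, hedge a b hab]
  have hMone : M *ᵥ 1 = S • 1 := by
    ext a
    simp [M, Matrix.mulVec, dotProduct, ← Finset.mul_sum, hrow]
    field_simp
  have hvv : Matrix.vecMulVec v v = (S / n) • Matrix.vecMulVec 1 1 := by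
    ext
    simp [v, Matrix.vecMulVec_apply, Real.mul_self_sqrt (div_nonneg hS hn.le)]
  refine ⟨v, M, ⟨hH2, (blockN_posSemidef_iff v M).mpr ?_⟩, ?_⟩
  · rw [hvv]
    exact hH2.2.1.sub_smul_vecMulVec_one hMone
  · simp only [v, Finset.sum_const, Finset.card_univ, nsmul_eq_mul, Real.sqrt_div hS]
    field_simp
    rw [Real.sq_sqrt hn.le]
    ring

lemma sInf_eq_neg_sqrt_sSup {S T : Set ℝ} (hS : S.Nonempty) (hSb : BddAbove S)
    (hT : ∀ t ∈ T, -√(sSup S) ≤ t) (hST : ∀ s ∈ S, -√s ∈ T) : sInf T = -√(sSup S) := by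
  refine le_antisymm ?_ (le_csInf ⟨_, hST _ hS.some_mem⟩ hT)
  rw [Real.sqrt_monotone.map_csSup_of_continuousAt Real.continuous_sqrt.continuousAt hS hSb,
    le_neg]
  refine csSup_le (hS.image _) ?_
  rintro _ ⟨s, hs, rfl⟩
  rw [le_neg]
  exact csInf_le ⟨_, hT⟩ (hST s hs)

theorem stmt1 {V : Type*} [Fintype V] [DecidableEq V] [Nonempty V]
    (G : SimpleGraph V) (hG : VertexTransitive G)
    (J₀ : V → ℝ) (hJ₀ : ∀ a, J₀ a = 1 / Real.sqrt (Fintype.card V)) :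
    sInf {x : ℝ | ∃ (v : V → ℝ) (M : Matrix V V ℝ),
        HFeasible G v M ∧ x = ∑ a, J₀ a * v a}
      = - Real.sqrt (lovaszTheta G) := by
  have hn : 0 < √(Fintype.card V) := by positivity
  have hJ (v : V → ℝ) : ∑ a, J₀ a * v a = (∑ a, v a) / √(Fintype.card V) := by
    simp [hJ₀, div_eq_inv_mul, Finset.mul_sum]
  rw [lovaszTheta_eq_sSup_thetaValues]
  refine sInf_eq_neg_sqrt_sSup (thetaValues_nonempty G) (thetaValues_bddAbove G) ?_ ?_
  · rintro _ ⟨v, M, h, rfl⟩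
    have hlow := h.neg_sqrt_le_sum
    rw [lovaszTheta_eq_sSup_thetaValues] at hlow
    rw [hJ, le_div_iff₀ hn]
    linarith
  · rintro _ ⟨M', hM', rfl⟩
    obtain ⟨v, M, h, hv⟩ := hM'.exists_hFeasible hG
    exact ⟨v, M, h, by rw [hJ, hv]; field_simp⟩
end

section
/- Let G be a finite simple graph on a nonempty vertex set V that is vertex-transitive. Then ϑ(G) equals the supremum of the sum of all entries of M', taken only over those theta-feasible matrices M' that are invariant under every graph automorphism g of G (i.e. M'_{g(α), g(β)} = M'_{αβ} for all vertices α, β); moreover every such invariant theta-feasible matrix has all diagonal entries equal to 1/|V|. -/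
open scoped BigOperators

/-!
Averaging a theta-feasible matrix over the finite automorphism group of `G` keeps it
theta-feasible (positive semidefiniteness, trace and the zero pattern on edges are all preserved
by simultaneous permutation of rows and columns) and keeps the sum of its entries, while making
it invariant. Hence both suprema range over the same set of values. For an invariant matrix,
vertex-transitivity makes the diagonal constant, and trace `1` pins it to `1 / |V|`.
-/

open scoped ComplexOrder

namespace Matrix

variable {Γ V 𝕜 : Type*} [Group Γ] [Fintype Γ] [MulAction Γ V] [RCLike 𝕜]

variable (Γ) in
noncomputable def orbitAverage (M : Matrix V V 𝕜) : Matrix V V 𝕜 :=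
  (Fintype.card Γ : 𝕜)⁻¹ • ∑ g : Γ, M.submatrix (g • ·) (g • ·)

theorem orbitAverage_apply (M : Matrix V V 𝕜) (a b : V) :
    M.orbitAverage Γ a b = (Fintype.card Γ : 𝕜)⁻¹ * ∑ g : Γ, M (g • a) (g • b) := by
  simp [orbitAverage, sum_apply]

theorem orbitAverage_smul_smul (M : Matrix V V 𝕜) (h : Γ) (a b : V) :
    M.orbitAverage Γ (h • a) (h • b) = M.orbitAverage Γ a b := by
  simp only [orbitAverage_apply, ← mul_smul]
  congr 1
  exact Fintype.sum_equiv (Equiv.mulRight h) _ _ fun _ => rfl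

theorem orbitAverage_eq_zero {M : Matrix V V 𝕜} {a b : V}
    (h : ∀ g : Γ, M (g • a) (g • b) = 0) : M.orbitAverage Γ a b = 0 := by
  simp [orbitAverage_apply, h]

theorem IsSymm.orbitAverage {M : Matrix V V 𝕜} (hM : M.IsSymm) : (M.orbitAverage Γ).IsSymm :=
  IsSymm.ext fun a b => by simp only [orbitAverage_apply, hM.apply]

theorem PosSemidef.orbitAverage [Fintype V] {M : Matrix V V 𝕜} (hM : M.PosSemidef) :
    (M.orbitAverage Γ).PosSemidef :=
  (posSemidef_sum _ fun g _ => hM.submatrix (g • ·)).smul (by positivity)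

theorem trace_orbitAverage [Fintype V] (M : Matrix V V 𝕜) :
    (M.orbitAverage Γ).trace = M.trace := by
  have hperm : ∀ g : Γ, (M.submatrix (g • ·) (g • ·)).trace = M.trace := fun g =>
    Fintype.sum_equiv (MulAction.toPerm g) _ _ fun _ => rfl
  simp [orbitAverage, trace_sum, hperm]

theorem sum_orbitAverage [Fintype V] (M : Matrix V V 𝕜) :
    ∑ a, ∑ b, M.orbitAverage Γ a b = ∑ a, ∑ b, M a b := by
  have hperm : ∀ g : Γ, ∑ a, ∑ b, M (g • a) (g • b) = ∑ a, ∑ b, M a b := fun g =>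
    Fintype.sum_equiv (MulAction.toPerm g) _ _ fun a =>
      Fintype.sum_equiv (MulAction.toPerm g) _ _ fun _ => rfl
  simp only [orbitAverage_apply, ← Finset.mul_sum]
  rw [Finset.sum_comm_cycle, Finset.sum_congr rfl fun g _ => hperm g]
  simp

theorem apply_self_eq_one_div_card {K : Type*} [Field K] [CharZero K] [Fintype V]
    {M : Matrix V V K} (hdiag : ∀ a b, M a a = M b b) (htr : M.trace = 1) (a : V) :
    M a a = 1 / Fintype.card V := by
  have : Nonempty V := ⟨a⟩
  rw [← htr, trace, eq_div_iff (by simp)]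
  simp [hdiag _ a, mul_comm]

end Matrix

theorem ThetaFeasible.orbitAverage {V Γ : Type*} [Fintype V] [Group Γ] [Fintype Γ]
    [MulAction Γ V] {G : SimpleGraph V} {M : Matrix V V ℝ} (hM : ThetaFeasible G M)
    (hΓ : ∀ (g : Γ) {a b : V}, G.Adj a b → G.Adj (g • a) (g • b)) :
    ThetaFeasible G (M.orbitAverage Γ) :=
  ⟨hM.1.orbitAverage, hM.2.1.orbitAverage, M.trace_orbitAverage.trans hM.2.2.1,
    fun _ _ hab => Matrix.orbitAverage_eq_zero fun g => hM.2.2.2 _ _ (hΓ g hab)⟩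

instance SimpleGraph.finite_iso_self {V : Type*} [Finite V] (G : SimpleGraph V) :
    Finite (G ≃g G) :=
  Finite.of_injective _ (MulAction.toPerm_injective (α := G ≃g G) (β := V))

theorem stmt5_general {V : Type*} [Fintype V]
    (G : SimpleGraph V) (hG : VertexTransitive G) :
    (lovaszTheta G
        = sSup {x : ℝ | ∃ M : Matrix V V ℝ, ThetaFeasible G M ∧
            (∀ (g : G ≃g G) (a b : V), M (g a) (g b) = M a b) ∧
            x = ∑ a, ∑ b, M a b})
      ∧ ∀ M : Matrix V V ℝ, ThetaFeasible G M →
          (∀ (g : G ≃g G) (a b : V), M (g a) (g b) = M a b) →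
          ∀ a, M a a = 1 / (Fintype.card V : ℝ) := by
  have := Fintype.ofFinite (G ≃g G)
  refine ⟨congrArg sSup <| Set.ext fun x => ⟨?_, ?_⟩, fun M hM hinv a => ?_⟩
  · rintro ⟨M, hM, rfl⟩
    exact ⟨M.orbitAverage (G ≃g G), hM.orbitAverage fun g _ _ => g.map_adj_iff.mpr,
      M.orbitAverage_smul_smul, M.sum_orbitAverage.symm⟩
  · rintro ⟨M, hM, -, rfl⟩
    exact ⟨M, hM, rfl⟩
  · refine Matrix.apply_self_eq_one_div_card (fun a b => ?_) hM.2.2.1 a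
    obtain ⟨g, rfl⟩ := hG a b
    exact (hinv g a a).symm

theorem stmt5 {V : Type*} [Fintype V] [Nonempty V]
    (G : SimpleGraph V) (hG : VertexTransitive G) :
    (lovaszTheta G
        = sSup {x : ℝ | ∃ M : Matrix V V ℝ, ThetaFeasible G M ∧
            (∀ (g : G ≃g G) (a b : V), M (g a) (g b) = M a b) ∧
            x = ∑ a, ∑ b, M a b})
      ∧ ∀ M : Matrix V V ℝ, ThetaFeasible G M →
          (∀ (g : G ≃g G) (a b : V), M (g a) (g b) = M a b) →
          ∀ a, M a a = 1 / (Fintype.card V : ℝ) :=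
  stmt5_general G hG
end

section
/- Let G be a finite simple graph on vertex set {1,…,n}, and let (O_α)_{α=1}^n be the Pauli representation of the commutation relations of G. Then each O_α is Hermitian, O_α² = I; moreover O_α O_β = −O_β O_α whenever α and β are adjacent in G, and O_α O_β = O_β O_α whenever α ≠ β are not adjacent in G. -/
open scoped BigOperators

/-- Pauli X matrix. -/
def pauliX : Matrix (Fin 2) (Fin 2) ℂ := !![0, 1; 1, 0]

/-- Pauli Z matrix. -/
def pauliZ : Matrix (Fin 2) (Fin 2) ℂ := !![1, 0; 0, -1]

open Classical in
/-- The Pauli representation of the commutation relations of a graph `G` on `{1,…,n}`: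
`O_α = P₁ ⊗ ⋯ ⊗ Pₙ` where `P_α = X`, `P_β = Z` for `β < α` adjacent to `α`, and `P_β = I`
otherwise.  Here `ℂ^{2^n}` is realized as functions `Fin n → Fin 2`, and the Kronecker
product of the `2×2` factors is the matrix whose `(f, g)` entry is the product of the
entries of the factors. -/
noncomputable def pauliRep {n : ℕ} (G : SimpleGraph (Fin n)) (α : Fin n) :
    Matrix (Fin n → Fin 2) (Fin n → Fin 2) ℂ :=
  Matrix.of fun f g => ∏ i,
    (if i = α then pauliX else if i < α ∧ G.Adj i α then pauliZ else 1) (f i) (g i)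

/-- The operator norm of a complex matrix acting on ℂ^d with the standard Hermitian
inner product. -/
noncomputable def matOpNorm {m : Type*} [Fintype m] [DecidableEq m] (M : Matrix m m ℂ) : ℝ :=
  ‖Matrix.toEuclideanCLM (𝕜 := ℂ) M‖

/-! ### Auxiliary tensor-product machinery -/

/-- Entrywise tensor product of `n` copies of 2×2 matrices. -/
noncomputable def tensorOf {n : ℕ} (P : Fin n → Matrix (Fin 2) (Fin 2) ℂ) :
    Matrix (Fin n → Fin 2) (Fin n → Fin 2) ℂ :=
  Matrix.of fun f g => ∏ i, P i (f i) (g i)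

lemma tensorOf_mul {n : ℕ} (P Q : Fin n → Matrix (Fin 2) (Fin 2) ℂ) :
    tensorOf P * tensorOf Q = tensorOf fun i => P i * Q i := by
  ext f h
  simp only [tensorOf, Matrix.mul_apply, Matrix.of_apply]
  rw [Finset.prod_univ_sum]
  rw [Fintype.piFinset_univ]
  refine Finset.sum_congr rfl fun g _ => ?_
  rw [Finset.prod_mul_distrib]

lemma tensorOf_one {n : ℕ} :
    tensorOf (fun _ : Fin n => (1 : Matrix (Fin 2) (Fin 2) ℂ)) = 1 := by
  ext f g
  simp only [tensorOf, Matrix.of_apply, Matrix.one_apply]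
  by_cases h : f = g
  · subst h; simp
  · rw [if_neg h]
    obtain ⟨i, hi⟩ := Function.ne_iff.mp h
    exact Finset.prod_eq_zero (Finset.mem_univ i) (by simp [Matrix.one_apply, hi])

lemma tensorOf_isHermitian {n : ℕ} (P : Fin n → Matrix (Fin 2) (Fin 2) ℂ)
    (h : ∀ i, (P i).IsHermitian) : (tensorOf P).IsHermitian := by
  ext f g
  simp only [tensorOf, Matrix.conjTranspose_apply, Matrix.of_apply, star_prod]
  refine Finset.prod_congr rfl fun i _ => ?_
  have := congrFun (congrFun (h i) (f i)) (g i)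
  simpa [Matrix.conjTranspose_apply] using this

lemma tensorOf_anticomm {n : ℕ} (P Q : Fin n → Matrix (Fin 2) (Fin 2) ℂ) (α : Fin n)
    (h1 : P α * Q α = -(Q α * P α)) (h2 : ∀ i, i ≠ α → P i * Q i = Q i * P i) :
    tensorOf P * tensorOf Q = -(tensorOf Q * tensorOf P) := by
  rw [tensorOf_mul, tensorOf_mul]
  ext f g
  simp only [tensorOf, Matrix.of_apply, Matrix.neg_apply]
  calc ∏ i, (P i * Q i) (f i) (g i)
      = ∏ i, (if i = α then (-1 : ℂ) else 1) * (Q i * P i) (f i) (g i) := by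
        refine Finset.prod_congr rfl fun i _ => ?_
        by_cases hi : i = α
        · subst hi; rw [if_pos rfl, h1]; simp
        · rw [if_neg hi, h2 i hi]; ring
    _ = (∏ i, (if i = α then (-1 : ℂ) else 1)) * ∏ i, (Q i * P i) (f i) (g i) :=
        Finset.prod_mul_distrib
    _ = -∏ i, (Q i * P i) (f i) (g i) := by
        rw [Finset.prod_ite_eq' Finset.univ α (fun _ => (-1 : ℂ))]
        simp

lemma tensorOf_comm {n : ℕ} (P Q : Fin n → Matrix (Fin 2) (Fin 2) ℂ)
    (h : ∀ i, P i * Q i = Q i * P i) :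
    tensorOf P * tensorOf Q = tensorOf Q * tensorOf P := by
  rw [tensorOf_mul, tensorOf_mul]
  exact congrArg tensorOf (funext h)

/-! ### Pauli matrix facts -/

lemma pauliX_herm : pauliX.IsHermitian := by
  ext i j; fin_cases i <;> fin_cases j <;>
    simp [pauliX, Matrix.conjTranspose_apply]

lemma pauliZ_herm : pauliZ.IsHermitian := by
  ext i j; fin_cases i <;> fin_cases j <;>
    simp [pauliZ, Matrix.conjTranspose_apply]

lemma pauliX_sq : pauliX * pauliX = 1 := by
  ext i j; fin_cases i <;> fin_cases j <;>
    simp [pauliX, Matrix.mul_apply, Fin.sum_univ_two, Matrix.one_apply]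

lemma pauliZ_sq : pauliZ * pauliZ = 1 := by
  ext i j; fin_cases i <;> fin_cases j <;>
    simp [pauliZ, Matrix.mul_apply, Fin.sum_univ_two, Matrix.one_apply]

lemma pauliXZ : pauliX * pauliZ = -(pauliZ * pauliX) := by
  ext i j; fin_cases i <;> fin_cases j <;>
    simp [pauliX, pauliZ, Matrix.mul_apply, Fin.sum_univ_two]

open Classical in
lemma pauliRep_eq {n : ℕ} (G : SimpleGraph (Fin n)) (α : Fin n) :
    pauliRep G α =
      tensorOf (fun i => if i = α then pauliX else if i < α ∧ G.Adj i α then pauliZ else 1) :=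
  rfl

theorem stmt9 {n : ℕ} (G : SimpleGraph (Fin n)) :
    (∀ α, (pauliRep G α).IsHermitian) ∧
    (∀ α, pauliRep G α * pauliRep G α = 1) ∧
    (∀ α β, G.Adj α β → pauliRep G α * pauliRep G β = -(pauliRep G β * pauliRep G α)) ∧
    (∀ α β, α ≠ β → ¬ G.Adj α β →
      pauliRep G α * pauliRep G β = pauliRep G β * pauliRep G α) := by
  classical
  have key : ∀ α β : Fin n, α < β → G.Adj α β →
      pauliRep G α * pauliRep G β = -(pauliRep G β * pauliRep G α) := by
    intro α β hlt hadj
    rw [pauliRep_eq, pauliRep_eq]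
    apply tensorOf_anticomm _ _ α
    · rw [if_pos rfl, if_neg (by intro h; exact absurd h (ne_of_lt hlt)),
        if_pos ⟨hlt, hadj⟩]
      exact pauliXZ
    · intro i hi
      rw [if_neg hi]
      by_cases hib : i = β
      · subst hib
        rw [if_pos rfl, if_neg (by rintro ⟨h, -⟩; exact absurd hlt (not_lt.mpr h.le))]
        simp
      · rw [if_neg hib]
        split_ifs <;> simp
  refine ⟨?_, ?_, ?_, ?_⟩
  · intro α
    rw [pauliRep_eq]
    apply tensorOf_isHermitian
    intro i
    split_ifs
    · exact pauliX_herm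
    · exact pauliZ_herm
    · exact Matrix.isHermitian_one
  · intro α
    rw [pauliRep_eq, tensorOf_mul]
    rw [show (fun i => (if i = α then pauliX else if i < α ∧ G.Adj i α then pauliZ else 1) *
        (if i = α then pauliX else if i < α ∧ G.Adj i α then pauliZ else 1)) =
        (fun _ : Fin n => (1 : Matrix (Fin 2) (Fin 2) ℂ)) from ?_, tensorOf_one]
    funext i
    split_ifs
    · exact pauliX_sq
    · exact pauliZ_sq
    · simp
  · intro α β hadj
    rcases lt_or_gt_of_ne (G.ne_of_adj hadj) with h | h
    · exact key α β h hadj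
    · have := key β α h hadj.symm
      rw [this, neg_neg]
  · intro α β hne hnadj
    rw [pauliRep_eq, pauliRep_eq]
    apply tensorOf_comm
    intro i
    by_cases hia : i = α
    · subst hia
      rw [if_pos rfl, if_neg hne, if_neg (by rintro ⟨-, h⟩; exact hnadj h)]
      simp
    · rw [if_neg hia]
      by_cases hib : i = β
      · subst hib
        rw [if_pos rfl, if_neg (by rintro ⟨-, h⟩; exact hnadj h.symm)]
        simp
      · rw [if_neg hib]
        split_ifs <;> simp
end

section
/- Let G be a finite simple graph on vertex set {1,…,n}, let (O_α)_{α=1}^n be the Pauli representation of the commutation relations of G, let S be an independent set of G, and let K_α ≥ 0 be nonnegative reals for α ∈ S. Then the operator norm satisfies ‖Σ_{α∈S} K_α O_α‖ = Σ_{α∈S} K_α. In particular, for positive weights m_α and w := Σ_{α∈S} m_α, the choice K_α = m_α/√w satisfies Σ_{α∈S} K_α²/m_α = 1 and ‖Σ_{α∈S} K_α O_α‖² = w, so the weighted Ψ function of G is bounded below by the maximum weight of an independent set of G. -/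
open scoped BigOperators

/-! Each `O_α` is a tensor product of Hermitian unitaries, hence unitary, so the triangle
inequality bounds the norm by `∑ K_α`.  Conversely, the product state that is `(1, 1)` on the
sites of `S` and `(1, 0)` elsewhere is fixed by every `O_α` with `α ∈ S`: the `X` factor sits on
a site of `S`, and the `Z` factors sit on neighbours of `α`, which lie outside `S` by
independence.  So this state is an eigenvector of `∑ K_α O_α` with eigenvalue `∑ K_α`. -/

open Matrix

namespace Matrix

variable {ι m R : Type*} [Fintype ι] [CommSemiring R]

def piKron (P : ι → Matrix m m R) : Matrix (ι → m) (ι → m) R :=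
  of fun f g => ∏ i, P i (f i) (g i)

theorem piKron_one [DecidableEq m] : piKron (1 : ι → Matrix m m R) = 1 := by
  ext f g
  simp [piKron, one_apply, Finset.prod_ite_zero, funext_iff]

theorem conjTranspose_piKron [StarRing R] (P : ι → Matrix m m R) :
    (piKron P)ᴴ = piKron fun i => (P i)ᴴ := by
  ext f g
  simp [piKron, star_prod]

variable [DecidableEq ι] [Fintype m]

theorem piKron_mulVec (P : ι → Matrix m m R) (w : ι → m → R) :
    piKron P *ᵥ (fun f => ∏ i, w i (f i)) = fun f => ∏ i, (P i *ᵥ w i) (f i) := by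
  funext f
  simp only [mulVec, dotProduct, piKron, of_apply, ← Finset.prod_mul_distrib]
  exact (Fintype.prod_sum fun i b => P i (f i) b * w i b).symm

theorem piKron_mul (P Q : ι → Matrix m m R) : piKron P * piKron Q = piKron (P * Q) := by
  ext f h
  simp only [mul_apply, piKron, of_apply, Pi.mul_apply, ← Finset.prod_mul_distrib]
  exact (Fintype.prod_sum fun i b => P i (f i) b * Q i b (h i)).symm

theorem piKron_mem_unitary [DecidableEq m] [StarRing R] {P : ι → Matrix m m R}
    (hP : ∀ i, P i ∈ unitary (Matrix m m R)) :
    piKron P ∈ unitary (Matrix (ι → m) (ι → m) R) := by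
  have hstar : star (piKron P) = piKron (star P) := conjTranspose_piKron P
  rw [Unitary.mem_iff, hstar, piKron_mul, piKron_mul, ← piKron_one (ι := ι)]
  exact ⟨congrArg piKron (funext fun i => Unitary.star_mul_self_of_mem (hP i)),
    congrArg piKron (funext fun i => Unitary.mul_star_self_of_mem (hP i))⟩

end Matrix

section OpNorm

variable {m : Type*} [Fintype m] [DecidableEq m]

theorem matOpNorm_of_mem_unitary [Nonempty m] {U : Matrix m m ℂ}
    (hU : U ∈ unitary (Matrix m m ℂ)) : matOpNorm U = 1 :=
  CStarRing.norm_of_mem_unitary (Unitary.map_mem (toEuclideanCLM (𝕜 := ℂ)) hU)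

theorem norm_le_matOpNorm_of_mulVec_eq_smul {M : Matrix m m ℂ} {v : m → ℂ} (hv : v ≠ 0)
    {c : ℂ} (h : M *ᵥ v = c • v) : ‖c‖ ≤ matOpNorm M := by
  unfold matOpNorm
  have hv' : 0 < ‖WithLp.toLp 2 v‖ := norm_pos_iff.mpr (by simpa using hv)
  have := (toEuclideanCLM (𝕜 := ℂ) M).le_opNorm (WithLp.toLp 2 v)
  rw [toEuclideanCLM_toLp, h, WithLp.toLp_smul, norm_smul] at this
  exact le_of_mul_le_mul_right this hv'

theorem matOpNorm_sum_smul_of_mulVec_eq_self {ι : Type*} {s : Finset ι}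
    {U : ι → Matrix m m ℂ} (hU : ∀ α ∈ s, U α ∈ unitary (Matrix m m ℂ)) {v : m → ℂ}
    (hv : v ≠ 0) (hUv : ∀ α ∈ s, U α *ᵥ v = v) {K : ι → ℝ} (hK : ∀ α ∈ s, 0 ≤ K α) :
    matOpNorm (∑ α ∈ s, (K α : ℂ) • U α) = ∑ α ∈ s, K α := by
  obtain ⟨j, -⟩ := Function.ne_iff.mp hv
  have : Nonempty m := ⟨j⟩
  apply le_antisymm
  · calc matOpNorm (∑ α ∈ s, (K α : ℂ) • U α)
        ≤ ∑ α ∈ s, ‖(K α : ℂ)‖ * matOpNorm (U α) := by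
          rw [matOpNorm, map_sum]
          refine (norm_sum_le _ _).trans (Finset.sum_le_sum fun α _ => ?_)
          rw [map_smul, matOpNorm]
          exact (norm_smul _ _).le
      _ = ∑ α ∈ s, K α := Finset.sum_congr rfl fun α hα => by
          rw [matOpNorm_of_mem_unitary (hU α hα), mul_one, Complex.norm_real,
            Real.norm_of_nonneg (hK α hα)]
  · have h : (∑ α ∈ s, (K α : ℂ) • U α) *ᵥ v = ((∑ α ∈ s, K α : ℝ) : ℂ) • v := by
      rw [sum_mulVec, Complex.ofReal_sum, Finset.sum_smul]
      exact Finset.sum_congr rfl fun α hα => by rw [smul_mulVec, hUv α hα]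
    have := norm_le_matOpNorm_of_mulVec_eq_smul hv h
    rwa [Complex.norm_real, Real.norm_of_nonneg (Finset.sum_nonneg hK)] at this

end OpNorm

theorem pauliX_mem_unitary : pauliX ∈ unitary (Matrix (Fin 2) (Fin 2) ℂ) := by
  rw [Unitary.mem_iff, star_eq_conjTranspose]
  constructor <;> ext i j <;> fin_cases i <;> fin_cases j <;>
    simp [pauliX, mul_apply, Fin.sum_univ_two]

theorem pauliZ_mem_unitary : pauliZ ∈ unitary (Matrix (Fin 2) (Fin 2) ℂ) := by
  rw [Unitary.mem_iff, star_eq_conjTranspose]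
  constructor <;> ext i j <;> fin_cases i <;> fin_cases j <;>
    simp [pauliZ, mul_apply, Fin.sum_univ_two]

theorem pauliX_mulVec : pauliX *ᵥ ![1, 1] = ![1, 1] := by
  ext i; fin_cases i <;> simp [pauliX, mulVec, dotProduct, Fin.sum_univ_two]

theorem pauliZ_mulVec : pauliZ *ᵥ ![1, 0] = ![1, 0] := by
  ext i; fin_cases i <;> simp [pauliZ, mulVec, dotProduct, Fin.sum_univ_two]

section PauliRep

variable {n : ℕ} (G : SimpleGraph (Fin n))

open Classical in
noncomputable def pauliFactor (α i : Fin n) : Matrix (Fin 2) (Fin 2) ℂ :=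
  if i = α then pauliX else if i < α ∧ G.Adj i α then pauliZ else 1

theorem pauliRep_eq_piKron (α : Fin n) : pauliRep G α = piKron (pauliFactor G α) := rfl

theorem pauliRep_mem_unitary (α : Fin n) :
    pauliRep G α ∈ unitary (Matrix (Fin n → Fin 2) (Fin n → Fin 2) ℂ) := by
  refine pauliRep_eq_piKron G α ▸ piKron_mem_unitary fun i => ?_
  unfold pauliFactor
  split_ifs
  exacts [pauliX_mem_unitary, pauliZ_mem_unitary, one_mem _]

def siteState (S : Finset (Fin n)) (i : Fin n) : Fin 2 → ℂ :=
  if i ∈ S then ![1, 1] else ![1, 0]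

theorem prod_siteState_ne_zero (S : Finset (Fin n)) :
    (fun f : Fin n → Fin 2 => ∏ i, siteState S i (f i)) ≠ 0 := by
  refine Function.ne_iff.mpr ⟨0, ?_⟩
  simp only [Pi.zero_apply, siteState]
  exact Finset.prod_ne_zero_iff.mpr fun i _ => by split_ifs <;> simp

variable {G} {S : Finset (Fin n)}

theorem pauliFactor_mulVec_siteState (hS : ∀ a ∈ S, ∀ b ∈ S, ¬ G.Adj a b) {α : Fin n} (hα : α ∈ S) (i : Fin n) :
    pauliFactor G α i *ᵥ siteState S i = siteState S i := by
  unfold pauliFactor siteState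
  by_cases hiα : i = α
  · subst hiα
    rw [if_pos rfl, if_pos hα, pauliX_mulVec]
  by_cases hadj : i < α ∧ G.Adj i α
  · have hiS : i ∉ S := fun hiS => hS i hiS α hα hadj.2
    rw [if_neg hiα, if_pos hadj, if_neg hiS, pauliZ_mulVec]
  · rw [if_neg hiα, if_neg hadj, one_mulVec]

theorem pauliRep_mulVec_siteState (hS : ∀ a ∈ S, ∀ b ∈ S, ¬ G.Adj a b) {α : Fin n} (hα : α ∈ S) :
    pauliRep G α *ᵥ (fun f => ∏ i, siteState S i (f i)) = fun f => ∏ i, siteState S i (f i) := by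
  rw [pauliRep_eq_piKron, piKron_mulVec]
  simp_rw [pauliFactor_mulVec_siteState hS hα]

theorem matOpNorm_sum_smul_pauliRep (hS : ∀ a ∈ S, ∀ b ∈ S, ¬ G.Adj a b) {K : Fin n → ℝ}
    (hK : ∀ α ∈ S, 0 ≤ K α) :
    matOpNorm (∑ α ∈ S, (K α : ℂ) • pauliRep G α) = ∑ α ∈ S, K α :=
  matOpNorm_sum_smul_of_mulVec_eq_self (fun α _ => pauliRep_mem_unitary G α)
    (prod_siteState_ne_zero S) (fun _ hα => pauliRep_mulVec_siteState hS hα) hK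

end PauliRep

theorem sum_sq_div_sqrt_sum_div_self {ι : Type*} {s : Finset ι} {m : ι → ℝ}
    (hm : ∀ α ∈ s, 0 < m α) (hs : s.Nonempty) :
    ∑ α ∈ s, (m α / Real.sqrt (∑ β ∈ s, m β)) ^ 2 / m α = 1 := by
  have hw : 0 < ∑ β ∈ s, m β := Finset.sum_pos hm hs
  calc ∑ α ∈ s, (m α / Real.sqrt (∑ β ∈ s, m β)) ^ 2 / m α
      = ∑ α ∈ s, m α / ∑ β ∈ s, m β := Finset.sum_congr rfl fun α hα => by
        rw [div_pow, Real.sq_sqrt hw.le]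
        field_simp [(hm α hα).ne']
    _ = 1 := by rw [← Finset.sum_div, div_self hw.ne']

theorem stmt12 {n : ℕ} (G : SimpleGraph (Fin n)) (S : Finset (Fin n))
    (hS : ∀ a ∈ S, ∀ b ∈ S, ¬ G.Adj a b) :
    (∀ K : Fin n → ℝ, (∀ α ∈ S, 0 ≤ K α) →
      matOpNorm (∑ α ∈ S, (K α : ℂ) • pauliRep G α) = ∑ α ∈ S, K α) ∧
    -- In particular, for positive weights m_α and w := Σ_{α∈S} m_α, the choice
    -- K_α = m_α/√w satisfies Σ_{α∈S} K_α²/m_α = 1 and ‖Σ_{α∈S} K_α O_α‖² = w.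
    (∀ m : Fin n → ℝ, (∀ α ∈ S, 0 < m α) → S.Nonempty →
      (∑ α ∈ S, (m α / Real.sqrt (∑ β ∈ S, m β)) ^ 2 / m α = 1) ∧
      matOpNorm (∑ α ∈ S, ((m α / Real.sqrt (∑ β ∈ S, m β) : ℝ) : ℂ) • pauliRep G α) ^ 2
        = ∑ β ∈ S, m β) := by
  refine ⟨fun K hK => matOpNorm_sum_smul_pauliRep hS hK,
    fun m hm hne => ⟨sum_sq_div_sqrt_sum_div_self hm hne, ?_⟩⟩
  have hw : 0 < ∑ β ∈ S, m β := Finset.sum_pos hm hne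
  rw [matOpNorm_sum_smul_pauliRep hS fun α hα => div_nonneg (hm α hα).le (Real.sqrt_nonneg _),
    ← Finset.sum_div, Real.div_sqrt, Real.sq_sqrt hw.le]
end
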